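/- Let F = A^{1/m} be an m-th root Finsler metric on an open subset U ⊆ ℝⁿ such that for every x ∈ U the polynomial y ↦ A(x,y) is irreducible in ℝ[y¹,…,yⁿ]. If F has isotropic Berwald curvature, i.e. B^i_{jkl} = c(x){F_{y^jy^k}δ^i_l + F_{y^ky^l}δ^i_j + F_{y^ly^j}δ^i_k + F_{y^jy^ky^l}y^i} for some smooth scalar function c on U (where F_{y^jy^k} = ∂²F/∂y^j∂y^k and F_{y^jy^ky^l} = ∂³F/∂y^j∂y^k∂y^l), then c ≡ 0 and B = 0, i.e. F is a Berwald metric. -/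

import Mathlib

open scoped BigOperators
open Matrix

noncomputable section

/-- Partial derivative of `f` in the `i`-th coordinate direction at `v`. -/
def pd {n : ℕ} (f : (Fin n → ℝ) → ℝ) (i : Fin n) (v : Fin n → ℝ) : ℝ :=
  fderiv ℝ f v (Pi.single i 1)

/-- `A(x,y) = a_{i₁⋯i_m}(x) y^{i₁}⋯y^{i_m}`. -/
def Amap {n m : ℕ} (a : (Fin m → Fin n) → (Fin n → ℝ) → ℝ) (x y : Fin n → ℝ) : ℝ :=
  ∑ ι : Fin m → Fin n, a ι x * ∏ k, y (ι k)

/-- Fundamental tensor `g_{ij} = ½ ∂²(F²)/∂y^i∂y^j`. -/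
def gmat {n : ℕ} (F : (Fin n → ℝ) → (Fin n → ℝ) → ℝ) (x y : Fin n → ℝ) :
    Matrix (Fin n) (Fin n) ℝ :=
  Matrix.of fun i j => (1/2) * pd (fun v => pd (fun w => (F x w)^2) j v) i y

/-- Spray coefficients `G^i = ¼ g^{il}[∂²(F²)/∂x^k∂y^l · y^k − ∂(F²)/∂x^l]`. -/
def sprayCoef {n : ℕ} (F : (Fin n → ℝ) → (Fin n → ℝ) → ℝ) (i : Fin n)
    (x y : Fin n → ℝ) : ℝ :=
  (1/4) * ∑ l, (gmat F x y)⁻¹ i l *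
    ((∑ k, pd (fun x' => pd (fun w => (F x' w)^2) l y) k x * y k)
      - pd (fun x' => (F x' y)^2) l x)

/-- Berwald curvature `B^i_{jkl} = ∂³G^i/∂y^j∂y^k∂y^l`. -/
def Bcurv {n : ℕ} (F : (Fin n → ℝ) → (Fin n → ℝ) → ℝ) (i j k l : Fin n)
    (x y : Fin n → ℝ) : ℝ :=
  pd (fun u => pd (fun v => pd (fun w => sprayCoef F i x w) l v) k u) j y

/-!
Positivity of `A(x, ·)` at both `y` and `-y` forces `m` to be even, so `F(x, ·)` is even. Then the
spray `G^i` is even and its third `y`-derivative `B` is odd in `y`, while the isotropic right-hand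
side is even; hence both vanish. If `c(x) ≠ 0`, the vanishing of the bracket at `y = (1, …, 1)`
forces the Hessian of `F(x, ·)` to vanish there, so `g = F · Hess F + ∇F ⊗ ∇F` has rank at most one
and cannot be positive definite when `n ≥ 2`.
-/

open Topology

section PartialDerivatives

variable {n : ℕ} {f g : (Fin n → ℝ) → ℝ} {v : Fin n → ℝ}

def hessian (f : (Fin n → ℝ) → ℝ) (y : Fin n → ℝ) : Matrix (Fin n) (Fin n) ℝ :=
  of fun j k => pd (fun v => pd f k v) j y

lemma pd_neg (f : (Fin n → ℝ) → ℝ) (i : Fin n) (v : Fin n → ℝ) :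
    pd (fun u => -f u) i v = -pd f i v := by
  simp [pd, fderiv_fun_neg]

lemma pd_comp_neg (f : (Fin n → ℝ) → ℝ) (i : Fin n) (v : Fin n → ℝ) :
    pd (fun u => f (-u)) i v = -pd f i (-v) := by
  change fderiv ℝ (f ∘ ContinuousLinearEquiv.neg ℝ) v _ = _
  rw [ContinuousLinearEquiv.comp_right_fderiv]
  simp [pd]

lemma Function.Even.pd (hf : f.Even) (i : Fin n) : (pd f i).Odd := fun v => by
  simpa [funext hf] using pd_comp_neg f i (-v)

lemma Function.Odd.pd (hf : f.Odd) (i : Fin n) : (pd f i).Even := fun v => by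
  simpa [funext hf, pd_neg] using pd_comp_neg f i (-v)

lemma Filter.EventuallyEq.pd_eq (h : f =ᶠ[𝓝 v] g) (i : Fin n) : pd f i v = pd g i v := by
  simp [pd, h.fderiv_eq]

lemma pd_const_mul (c : ℝ) (f : (Fin n → ℝ) → ℝ) (i : Fin n) (v : Fin n → ℝ) :
    pd (fun w => c * f w) i v = c * pd f i v := by
  change fderiv ℝ (c • f) v _ = _
  simp [fderiv_const_smul_field, pd]

lemma pd_mul (hf : DifferentiableAt ℝ f v) (hg : DifferentiableAt ℝ g v) (i : Fin n) :
    pd (fun w => f w * g w) i v = f v * pd g i v + g v * pd f i v := by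
  simp [pd, fderiv_fun_mul hf hg]

lemma ContDiffAt.differentiableAt_pd (hf : ContDiffAt ℝ 2 f v) (i : Fin n) :
    DifferentiableAt ℝ (pd f i) v :=
  ((hf.fderiv_right (m := 1) le_rfl).differentiableAt one_ne_zero).clm_apply
    (differentiableAt_const _)

lemma ContDiffAt.pd_pd_sq (hf : ContDiffAt ℝ 2 f v) (p q : Fin n) :
    pd (fun u => pd (fun w => f w ^ 2) q u) p v =
      2 * (f v * hessian f v p q + pd f p v * pd f q v) := by
  have hloc : (fun u => pd (fun w => f w ^ 2) q u) =ᶠ[𝓝 v] fun u => f u * (2 * pd f q u) := by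
    filter_upwards [hf.eventually (by simp)] with u hu
    simpa [sq, two_mul, mul_add] using
      pd_mul (hu.differentiableAt two_ne_zero) (hu.differentiableAt two_ne_zero) q
  have hd := hf.differentiableAt two_ne_zero
  rw [hloc.pd_eq, pd_mul hd ((hf.differentiableAt_pd q).const_mul 2), pd_const_mul]
  simp only [hessian, of_apply]
  ring

lemma ContDiffAt.hessian_isSymm (hf : ContDiffAt ℝ 2 f v) : (hessian f v).IsSymm := by
  have hd : DifferentiableAt ℝ (fderiv ℝ f) v :=
    (hf.fderiv_right (m := 1) le_rfl).differentiableAt one_ne_zero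
  have hsnd : ∀ p q, hessian f v p q =
      fderiv ℝ (fderiv ℝ f) v (Pi.single p 1) (Pi.single q 1) := by
    intro p q
    simp [hessian, pd, fderiv_clm_apply hd (differentiableAt_const _)]
  ext p q
  rw [transpose_apply, hsnd, hsnd]
  exact hf.isSymmSndFDerivAt (by simp [minSmoothness_of_isRCLikeNormedField]) _ _

lemma hessian_neg (hf : f.Even) (y : Fin n → ℝ) : hessian f (-y) = hessian f y := by
  ext j k
  exact ((hf.pd k).pd j).eq y

end PartialDerivatives

section Amap

variable {n m : ℕ} {a : (Fin m → Fin n) → (Fin n → ℝ) → ℝ} {x y : Fin n → ℝ}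

lemma Amap_neg (a : (Fin m → Fin n) → (Fin n → ℝ) → ℝ) (x y : Fin n → ℝ) :
    Amap a x (-y) = (-1) ^ m * Amap a x y := by
  simp only [Amap, Pi.neg_apply, Finset.prod_neg, Finset.card_univ, Fintype.card_fin,
    Finset.mul_sum]
  exact Finset.sum_congr rfl fun _ _ => by ring

lemma even_of_Amap_pos_of_Amap_neg_pos (h : 0 < Amap a x y) (hneg : 0 < Amap a x (-y)) :
    Even m := by
  by_contra hm
  rw [Amap_neg, (Nat.not_even_iff_odd.1 hm).neg_one_pow] at hneg
  linarith

lemma Amap_even (hm : Even m) (a : (Fin m → Fin n) → (Fin n → ℝ) → ℝ) (x : Fin n → ℝ) :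
    (Amap a x).Even := fun y => by
  rw [Amap_neg, hm.neg_one_pow, one_mul]

lemma contDiff_Amap {k : WithTop ℕ∞} (a : (Fin m → Fin n) → (Fin n → ℝ) → ℝ) (x : Fin n → ℝ) :
    ContDiff ℝ k (Amap a x) :=
  ContDiff.sum fun ι _ => contDiff_const.mul (contDiff_prod fun k _ => contDiff_apply ℝ ℝ (ι k))

end Amap

section Parity

variable {n : ℕ} {F : (Fin n → ℝ) → (Fin n → ℝ) → ℝ}

lemma sprayCoef_even (hF : ∀ x, (F x).Even) (i : Fin n) (x : Fin n → ℝ) :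
    (sprayCoef F i x).Even := fun y => by
  have hsq : ∀ x', (fun w => F x' w ^ 2).Even := fun x' => (hF x').left_comp (· ^ 2)
  have hg : gmat F x (-y) = gmat F x y := by
    ext p q
    exact congrArg (1 / 2 * ·) ((((hsq x).pd q).pd p).eq y)
  have hx : ∀ l, (fun x' => pd (fun w => F x' w ^ 2) l (-y)) =
      fun x' => -pd (fun w => F x' w ^ 2) l y := fun l => funext fun x' => ((hsq x').pd l).eq y
  simp only [sprayCoef, hg, hx, pd_neg, Pi.neg_apply, neg_mul_neg, fun x' => (hF x').eq y]

lemma Bcurv_odd (hF : ∀ x, (F x).Even) (i j k l : Fin n) (x : Fin n → ℝ) :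
    (Bcurv F i j k l x).Odd :=
  (((sprayCoef_even hF i x).pd l).pd k).pd j

end Parity

section IsotropicBracket

variable {n : ℕ} {f : (Fin n → ℝ) → ℝ}

/-- The bracket `F_{y^jy^k}δ^i_l + F_{y^ky^l}δ^i_j + F_{y^ly^j}δ^i_k + F_{y^jy^ky^l}y^i` of the
isotropic Berwald condition. -/
def isotropicBracket (f : (Fin n → ℝ) → ℝ) (y : Fin n → ℝ) (i j k l : Fin n) : ℝ :=
  hessian f y j k * (if i = l then 1 else 0) + hessian f y k l * (if i = j then 1 else 0)
    + hessian f y l j * (if i = k then 1 else 0)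
    + pd (fun u => pd (fun v => pd f l v) k u) j y * y i

lemma isotropicBracket_neg (hf : f.Even) (y : Fin n → ℝ) (i j k l : Fin n) :
    isotropicBracket f (-y) i j k l = isotropicBracket f y i j k l := by
  simp only [isotropicBracket, hessian_neg hf, (((hf.pd l).pd k).pd j).eq y, Pi.neg_apply,
    neg_mul_neg]

lemma hessian_eq_zero_of_isotropicBracket_eq_zero [Nontrivial (Fin n)]
    (hH : (hessian f 1).IsSymm) (h : ∀ i j k l, isotropicBracket f 1 i j k l = 0) :
    hessian f 1 = 0 := by
  simp only [isotropicBracket, Pi.one_apply, mul_one] at h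
  have hdiag : ∀ p, hessian f 1 p p = 0 := fun p => by
    obtain ⟨q, hq⟩ := exists_ne p
    -- with `i ∉ {j, k, l}` only the third-derivative term survives
    have h₁ := h q p p p
    have h₂ := h p p p p
    simp only [if_neg hq, ↓reduceIte] at h₁ h₂
    linarith
  ext p q
  obtain rfl | hpq := eq_or_ne p q
  · exact hdiag p
  have h₁ := h q p p q
  have h₂ := h p p p q
  simp only [if_neg hpq, if_neg hpq.symm, ↓reduceIte, hdiag] at h₁ h₂
  have := hH.apply p q
  rw [Matrix.zero_apply]
  linarith

lemma mul_isotropicBracket_eq_zero_of_Bcurv_eq {F : (Fin n → ℝ) → (Fin n → ℝ) → ℝ}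
    (hF : ∀ x, (F x).Even) {x : Fin n → ℝ} {c : ℝ} {i j k l : Fin n}
    (hB : ∀ y, y ≠ 0 → Bcurv F i j k l x y = c * isotropicBracket (F x) y i j k l)
    {y : Fin n → ℝ} (hy : y ≠ 0) : c * isotropicBracket (F x) y i j k l = 0 := by
  have hpos := hB y hy
  have hneg := hB (-y) (neg_ne_zero.2 hy)
  rw [(Bcurv_odd hF i j k l x).eq, isotropicBracket_neg (hF x)] at hneg
  linarith

end IsotropicBracket

lemma Matrix.not_posDef_vecMulVec {ι K : Type*} [Fintype ι] [DecidableEq ι] [Nontrivial ι]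
    [Field K] [PartialOrder K] [StarRing K] (v w : ι → K) : ¬(vecMulVec v w).PosDef := fun hpos =>
  Fintype.one_lt_card.not_ge ((rank_of_isUnit _ hpos.isUnit).symm.trans_le (rank_vecMulVec_le v w))

lemma gmat_eq_smul_hessian_add_vecMulVec {n : ℕ} {F : (Fin n → ℝ) → (Fin n → ℝ) → ℝ}
    {x y : Fin n → ℝ} (hF : ContDiffAt ℝ 2 (F x) y) :
    gmat F x y =
      F x y • hessian (F x) y + vecMulVec (fun p => pd (F x) p y) (fun q => pd (F x) q y) := by
  ext p q
  simp only [gmat, of_apply, hF.pd_pd_sq, Matrix.add_apply, Matrix.smul_apply, smul_eq_mul,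
    vecMulVec_apply]
  ring

theorem mth_root_isotropic_Berwald_general
    (n m : ℕ) (hn : 2 ≤ n)
    (U : Set (Fin n → ℝ))
    (a : (Fin m → Fin n) → (Fin n → ℝ) → ℝ)
    (hApos : ∀ x ∈ U, ∀ y : Fin n → ℝ, y ≠ 0 → 0 < Amap a x y)
    (F : (Fin n → ℝ) → (Fin n → ℝ) → ℝ)
    (hF : ∀ x y, F x y = (Amap a x y) ^ ((1:ℝ)/m))
    (hgpd : ∀ x ∈ U, ∀ y : Fin n → ℝ, y ≠ 0 → (gmat F x y).PosDef)
    (c : (Fin n → ℝ) → ℝ)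
    (hB : ∀ x ∈ U, ∀ y : Fin n → ℝ, y ≠ 0 → ∀ i j k l,
      Bcurv F i j k l x y = c x *
        (pd (fun v => pd (F x) k v) j y * (if i = l then (1:ℝ) else 0)
          + pd (fun v => pd (F x) l v) k y * (if i = j then (1:ℝ) else 0)
          + pd (fun v => pd (F x) j v) l y * (if i = k then (1:ℝ) else 0)
          + pd (fun u => pd (fun v => pd (F x) l v) k u) j y * y i))
    :
    (∀ x ∈ U, c x = 0) ∧
    (∀ x ∈ U, ∀ y : Fin n → ℝ, y ≠ 0 → ∀ i j k l, Bcurv F i j k l x y = 0) := by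
  have hc : ∀ x ∈ U, c x = 0 := by
    intro x hx
    have : Nontrivial (Fin n) := Fin.nontrivial_iff_two_le.2 hn
    have h1 : (1 : Fin n → ℝ) ≠ 0 := one_ne_zero
    have hm : Even m :=
      even_of_Amap_pos_of_Amap_neg_pos (hApos x hx 1 h1) (hApos x hx (-1) (neg_ne_zero.2 h1))
    have hFeven : ∀ x', (F x').Even := fun x' y => by rw [hF, hF, (Amap_even hm a x').eq]
    have hFsmooth : ContDiffAt ℝ 2 (F x) 1 := by
      rw [show F x = fun y => Amap a x y ^ ((1:ℝ)/m) from funext (hF x)]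
      exact (contDiff_Amap a x).contDiffAt.rpow_const_of_ne (hApos x hx 1 h1).ne'
    by_contra hcx
    have hH : hessian (F x) 1 = 0 :=
      hessian_eq_zero_of_isotropicBracket_eq_zero hFsmooth.hessian_isSymm fun i j k l =>
        (mul_eq_zero.1 (mul_isotropicBracket_eq_zero_of_Bcurv_eq hFeven
          (fun y hy => hB x hx y hy i j k l) h1)).resolve_left hcx
    have hg := hgpd x hx 1 h1
    rw [gmat_eq_smul_hessian_add_vecMulVec hFsmooth, hH, smul_zero, zero_add] at hg
    exact not_posDef_vecMulVec _ _ hg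
  exact ⟨hc, fun x hx y hy i j k l => by rw [hB x hx y hy, hc x hx, zero_mul]⟩

/-- an m-th root metric with isotropic Berwald curvature
necessarily has `c ≡ 0`, i.e. it is a Berwald metric. -/
theorem mth_root_isotropic_Berwald
    (n m : ℕ) (hn : 2 ≤ n) (hm : 3 ≤ m)
    (U : Set (Fin n → ℝ)) (hU : IsOpen U)
    (a : (Fin m → Fin n) → (Fin n → ℝ) → ℝ)
    (ha_smooth : ∀ ι, ContDiff ℝ (⊤:ℕ∞) (a ι))
    (ha_symm : ∀ (σ : Equiv.Perm (Fin m)) (ι : Fin m → Fin n) (x : Fin n → ℝ),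
      a (ι ∘ σ) x = a ι x)
    (hApos : ∀ x ∈ U, ∀ y : Fin n → ℝ, y ≠ 0 → 0 < Amap a x y)
    (F : (Fin n → ℝ) → (Fin n → ℝ) → ℝ)
    (hF : ∀ x y, F x y = (Amap a x y) ^ ((1:ℝ)/m))
    (hgpd : ∀ x ∈ U, ∀ y : Fin n → ℝ, y ≠ 0 → (gmat F x y).PosDef)
    (hirr : ∀ x ∈ U, ∃ P : MvPolynomial (Fin n) ℝ, Irreducible P ∧
      ∀ y : Fin n → ℝ, MvPolynomial.eval y P = Amap a x y)
    (c : (Fin n → ℝ) → ℝ) (hc : ContDiffOn ℝ (⊤:ℕ∞) c U)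
    (hB : ∀ x ∈ U, ∀ y : Fin n → ℝ, y ≠ 0 → ∀ i j k l,
      Bcurv F i j k l x y = c x *
        (pd (fun v => pd (F x) k v) j y * (if i = l then (1:ℝ) else 0)
          + pd (fun v => pd (F x) l v) k y * (if i = j then (1:ℝ) else 0)
          + pd (fun v => pd (F x) j v) l y * (if i = k then (1:ℝ) else 0)
          + pd (fun u => pd (fun v => pd (F x) l v) k u) j y * y i))
    :
    (∀ x ∈ U, c x = 0) ∧
    (∀ x ∈ U, ∀ y : Fin n → ℝ, y ≠ 0 → ∀ i j k l, Bcurv F i j k l x y = 0) :=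
  mth_root_isotropic_Berwald_general n m hn U a hApos F hF hgpd c hB
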